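/- arXiv:1905.09432 — 2 statements merged into one kernel-verified Lean document; each statement's English description precedes it below -/
import Mathlib

section
/- Let X and Z = Z_1 × ... × Z_m be nonempty finite types, let q be a joint probability mass function on X × Z with marginals q_X on X and q_Z on Z, let q_j denote the j-th coordinate marginal of q_Z, and let p = p_1 ⊗ ... ⊗ p_m be a fully factorized PMF on Z with p_j(z_j) > 0 for all z_j. Then the expected KL divergence of the conditional posterior to the factorized prior decomposes as: Σ_x q_X(x) · D_KL(q(·|x) ‖ p) = I(x; z) + TC(q_Z) + Σ_{j=1}^m D_KL(q_j ‖ p_j), where I(x; z) is the mutual information between x and z under q and TC(q_Z) is the total correlation of the marginal q_Z. -/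
/-!
For a nonnegative `q` the convention `0 · log 0 = 0` is automatic, so each of the four divergences
is a plain expectation `∑ q · log (ratio)`, and after summing out the fibres of the relevant
marginal map all of them are expectations under the joint `q(x, z)`. Where `q(x, z) > 0` every
marginal involved is positive too, and the ratio telescopes:
`q / (q_X ∏ p_j) = q / (q_X q_Z) · q_Z / ∏ q_j · ∏ (q_j / p_j)`; taking logarithms gives the
decomposition term by term.
-/

open Finset

/-- A probability mass function on a finite type: nonnegative and sums to 1. -/
def IsPMF {α : Type*} [Fintype α] (q : α → ℝ) : Prop :=
  (∀ a, 0 ≤ q a) ∧ ∑ a, q a = 1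

/-- Kullback–Leibler divergence between PMFs on a finite type,
with the convention `0 · log 0 = 0` (the sum runs over `a` with `q a > 0`). -/
noncomputable def KL {α : Type*} [Fintype α] (q p : α → ℝ) : ℝ :=
  ∑ a, if 0 < q a then q a * Real.log (q a / p a) else 0

/-- Mutual information of a joint PMF `q` on `α × β`:
`I(A;B) = D_KL(q ‖ q_A ⊗ q_B)` where `q_A`, `q_B` are the marginals. -/
noncomputable def MI {α β : Type*} [Fintype α] [Fintype β] (q : α × β → ℝ) : ℝ :=
  KL q (fun ab => (∑ b, q (ab.1, b)) * (∑ a, q (a, ab.2)))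

/-- The `j`-th coordinate marginal of a joint PMF `q` on a finite product. -/
noncomputable def margCoord {ι : Type*} [Fintype ι] [DecidableEq ι] {Z : ι → Type*}
    [∀ i, Fintype (Z i)] [∀ i, DecidableEq (Z i)]
    (q : (∀ i, Z i) → ℝ) (j : ι) (z : Z j) : ℝ :=
  ∑ w ∈ Finset.univ.filter (fun w : ∀ i, Z i => w j = z), q w

/-- Total correlation of a joint PMF `q` on a finite product:
`TC(q) = D_KL(q ‖ q_1 ⊗ ... ⊗ q_m)`, the KL divergence from `q` to the product of
its coordinate marginals. -/
noncomputable def totalCorr {ι : Type*} [Fintype ι] [DecidableEq ι] {Z : ι → Type*}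
    [∀ i, Fintype (Z i)] [∀ i, DecidableEq (Z i)]
    (q : (∀ i, Z i) → ℝ) : ℝ :=
  KL q (fun w => ∏ j, margCoord q j (w j))

open Real

section KL

variable {α : Type*} [Fintype α]

theorem KL_eq_sum_mul_log {q : α → ℝ} (hq : ∀ a, 0 ≤ q a) (r : α → ℝ) :
    KL q r = ∑ a, q a * log (q a / r a) := by
  refine sum_congr rfl fun a _ => ?_
  rcases (hq a).eq_or_lt with h | h
  · simp [← h]
  · rw [if_pos h]

theorem sum_mul_KL_div_sum {f : α → ℝ} (hf : ∀ a, 0 ≤ f a) (r : α → ℝ) :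
    (∑ a, f a) * KL (fun a => f a / ∑ b, f b) r = ∑ a, f a * log (f a / ((∑ b, f b) * r a)) := by
  rcases (sum_nonneg fun a _ => hf a).eq_or_lt with hs | hs
  · have hf0 : ∀ a, f a = 0 := fun a =>
      (sum_eq_zero_iff_of_nonneg fun b _ => hf b).1 hs.symm a (mem_univ a)
    simp [hf0]
  · rw [KL_eq_sum_mul_log (fun a => div_nonneg (hf a) hs.le), mul_sum]
    refine sum_congr rfl fun a _ => ?_
    rw [← mul_assoc, mul_div_cancel₀ _ hs.ne', div_div]

end KL

theorem sum_sum_filter_mul {α β : Type*} [Fintype α] [Fintype β] [DecidableEq β]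
    (f : α → ℝ) (e : α → β) (g : β → ℝ) :
    ∑ b, (∑ a ∈ univ.filter (fun a => e a = b), f a) * g b = ∑ a, f a * g (e a) := by
  rw [← sum_fiberwise univ e (fun a => f a * g (e a))]
  refine sum_congr rfl fun b _ => ?_
  rw [sum_mul]
  exact sum_congr rfl fun a ha => by rw [(mem_filter.1 ha).2]

section Product

variable {ι : Type*} [Fintype ι] [DecidableEq ι] {Z : ι → Type*}
  [∀ i, Fintype (Z i)] [∀ i, DecidableEq (Z i)]

theorem le_margCoord {w : (∀ i, Z i) → ℝ} (hw : ∀ z, 0 ≤ w z) (z : ∀ i, Z i) (j : ι) :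
    w z ≤ margCoord w j (z j) :=
  single_le_sum (fun z _ => hw z) (mem_filter.2 ⟨mem_univ z, rfl⟩)

theorem KL_margCoord_eq_sum {w : (∀ i, Z i) → ℝ} (hw : ∀ z, 0 ≤ w z) (j : ι) (r : Z j → ℝ) :
    KL (margCoord w j) r = ∑ z, w z * log (margCoord w j (z j) / r (z j)) := by
  rw [KL_eq_sum_mul_log (q := margCoord w j) fun t => sum_nonneg fun z _ => hw z]
  exact sum_sum_filter_mul w (fun z => z j) fun t => log (margCoord w j t / r t)

end Product

theorem log_div_mul_prod_eq {ι : Type*} (s : Finset ι) {a b c : ℝ} {u v : ι → ℝ}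
    (ha : a ≠ 0) (hb : b ≠ 0) (hc : c ≠ 0) (hu : ∀ i ∈ s, u i ≠ 0) (hv : ∀ i ∈ s, v i ≠ 0) :
    log (a / (b * ∏ i ∈ s, v i)) =
      log (a / (b * c)) + log (c / ∏ i ∈ s, u i) + ∑ i ∈ s, log (u i / v i) := by
  have hU := prod_ne_zero_iff.2 hu
  have hV := prod_ne_zero_iff.2 hv
  rw [log_div ha (mul_ne_zero hb hV), log_div ha (mul_ne_zero hb hc), log_div hc hU,
    log_mul hb hV, log_mul hb hc, log_prod hu, log_prod hv,
    sum_congr rfl fun i hi => log_div (hu i hi) (hv i hi), sum_sub_distrib]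
  ring

theorem expected_kl_decomposition_general
    {X : Type*} [Fintype X]
    {ι : Type*} [Fintype ι] [DecidableEq ι] (Z : ι → Type*)
    [∀ i, Fintype (Z i)] [∀ i, DecidableEq (Z i)]
    (q : X × (∀ i, Z i) → ℝ) (hq : IsPMF q)
    (p : ∀ i, Z i → ℝ) (hppos : ∀ i z, 0 < p i z) :
    ∑ x, (∑ z, q (x, z)) *
        KL (fun z => q (x, z) / (∑ z', q (x, z'))) (fun z => ∏ j, p j (z j)) =
      MI q + totalCorr (fun z => ∑ x, q (x, z)) +
        ∑ j, KL (margCoord (fun z => ∑ x, q (x, z)) j) (p j) := by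
  obtain ⟨hq0, -⟩ := hq
  set qZ : (∀ i, Z i) → ℝ := fun z => ∑ x, q (x, z)
  have hqZ0 : ∀ z, 0 ≤ qZ z := fun z => sum_nonneg fun x _ => hq0 (x, z)
  have hmarg : ∀ g : (∀ i, Z i) → ℝ, ∑ z, qZ z * g z = ∑ x, ∑ z, q (x, z) * g z := fun g => by
    simp only [qZ, sum_mul]
    exact sum_comm
  have hTC : totalCorr qZ = ∑ x, ∑ z, q (x, z) * log (qZ z / ∏ j, margCoord qZ j (z j)) := by
    rw [totalCorr, KL_eq_sum_mul_log hqZ0, hmarg]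
  have hcoord : ∑ j, KL (margCoord qZ j) (p j) =
      ∑ x, ∑ z, q (x, z) * ∑ j, log (margCoord qZ j (z j) / p j (z j)) := by
    simp_rw [KL_margCoord_eq_sum hqZ0, hmarg, mul_sum]
    rw [sum_comm]
    exact sum_congr rfl fun x _ => sum_comm
  rw [sum_congr rfl fun x _ => sum_mul_KL_div_sum (fun z => hq0 (x, z)) _, MI,
    KL_eq_sum_mul_log hq0, Fintype.sum_prod_type, hTC, hcoord]
  simp_rw [← sum_add_distrib, ← mul_add]
  refine sum_congr rfl fun x _ => sum_congr rfl fun z _ => ?_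
  rcases (hq0 (x, z)).eq_or_lt with h | h
  · simp [← h]
  have hqX : q (x, z) ≤ ∑ z', q (x, z') := single_le_sum (fun z _ => hq0 (x, z)) (mem_univ z)
  have hqZ : q (x, z) ≤ qZ z := single_le_sum (fun x _ => hq0 (x, z)) (mem_univ x)
  rw [log_div_mul_prod_eq univ h.ne' (h.trans_le hqX).ne' (h.trans_le hqZ).ne'
    (fun j _ => (h.trans_le (hqZ.trans (le_margCoord hqZ0 z j))).ne')
    (fun j _ => (hppos j (z j)).ne')]

/-- For a joint PMF `q` on `X × (Z_1 × ... × Z_m)` and a fully factorized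
everywhere-positive PMF `p = p_1 ⊗ ... ⊗ p_m` on the product, the expected KL divergence
of the conditional posterior `q(·|x)` to `p` decomposes as
`Σ_x q_X(x)·D_KL(q(·|x)‖p) = I(x;z) + TC(q_Z) + Σ_j D_KL(q_j‖p_j)`,
where `q_X`, `q_Z` are the marginals of `q`, and `q_j` the coordinate marginals of `q_Z`. -/
theorem expected_kl_decomposition
    {X : Type*} [Fintype X] [Nonempty X]
    {ι : Type*} [Fintype ι] [DecidableEq ι] (Z : ι → Type*)
    [∀ i, Fintype (Z i)] [∀ i, Nonempty (Z i)] [∀ i, DecidableEq (Z i)]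
    (q : X × (∀ i, Z i) → ℝ) (hq : IsPMF q)
    (p : ∀ i, Z i → ℝ) (hp : ∀ i, IsPMF (p i)) (hppos : ∀ i z, 0 < p i z) :
    ∑ x, (∑ z, q (x, z)) *
        KL (fun z => q (x, z) / (∑ z', q (x, z'))) (fun z => ∏ j, p j (z j)) =
      MI q + totalCorr (fun z => ∑ x, q (x, z)) +
        ∑ j, KL (margCoord (fun z => ∑ x, q (x, z)) j) (p j) :=
  expected_kl_decomposition_general Z q hq p hppos
end

section
/- Let X and Z be nonempty finite types, let q be a joint probability mass function on X × Z with marginal q_X on X, and let r(·|z) be, for each z ∈ Z, a PMF on X such that r(x|z) > 0 whenever q(x, z) > 0. Then the mutual information under q satisfies the variational lower bound I(x; z) ≥ H(q_X) + Σ_{(x,z) : q(x,z) > 0} q(x, z) · log r(x|z), where H(q_X) = -Σ_x q_X(x) · log q_X(x) is the entropy of the marginal of x. -/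
open Finset

/-- Entropy of a PMF on a finite type, `H(q) = -Σ_a q(a) · log q(a)`. -/
noncomputable def entropy {α : Type*} [Fintype α] (q : α → ℝ) : ℝ :=
  -∑ a, q a * Real.log (q a)

/-!
Write `q_Z` for the `z`-marginal of `q`. Splitting `log (q / (q_X q_Z))` as
`-log q_X + log r + log (q / (r q_Z))` shows that `I(x;z)` exceeds the right-hand side by exactly
`D_KL(q ‖ r(·|z) q_Z(z))`, and this is nonnegative by Gibbs' inequality, since `r(·|z) q_Z(z)` is a
PMF on `X × Z` charging every point charged by `q`.
-/

open Real

lemma sub_le_mul_log_div {a b : ℝ} (ha : 0 < a) (hb : 0 < b) : a - b ≤ a * log (a / b) := by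
  have h := one_sub_inv_le_log_of_pos (div_pos ha hb)
  rw [inv_div] at h
  calc a - b = a * (1 - b / a) := by field_simp
    _ ≤ a * log (a / b) := mul_le_mul_of_nonneg_left h ha.le

theorem KL_nonneg {α : Type*} [Fintype α] {q p : α → ℝ} (hq : IsPMF q) (hp : IsPMF p)
    (hqp : ∀ a, 0 < q a → 0 < p a) : 0 ≤ KL q p := by
  have hterm : ∀ a, q a - p a ≤ if 0 < q a then q a * log (q a / p a) else 0 := by
    intro a
    split_ifs with h
    · exact sub_le_mul_log_div h (hqp a h)
    · linarith [not_lt.mp h, hp.1 a]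
  calc 0 = ∑ a, (q a - p a) := by rw [sum_sub_distrib, hq.2, hp.2, sub_self]
    _ ≤ KL q p := sum_le_sum fun a _ => hterm a

section Joint

variable {α β : Type*} [Fintype α] [Fintype β]

noncomputable def condJoint (r : β → α → ℝ) (p : β → ℝ) : α × β → ℝ :=
  fun ab => r ab.2 ab.1 * p ab.2

lemma isPMF_condJoint {r : β → α → ℝ} {p : β → ℝ} (hr : ∀ b, IsPMF (r b)) (hp : IsPMF p) :
    IsPMF (condJoint r p) := by
  refine ⟨fun ab => mul_nonneg ((hr _).1 _) (hp.1 _), ?_⟩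
  simp only [condJoint, Fintype.sum_prod_type_right, ← sum_mul, (hr _).2, one_mul, hp.2]

lemma isPMF_marginal_right {q : α × β → ℝ} (hq : IsPMF q) : IsPMF fun b => ∑ a, q (a, b) :=
  ⟨fun b => sum_nonneg fun a _ => hq.1 _, by rw [← Fintype.sum_prod_type_right, hq.2]⟩

lemma entropy_marginal_left (q : α × β → ℝ) :
    entropy (fun a => ∑ b, q (a, b)) = -∑ ab, q ab * log (∑ b, q (ab.1, b)) := by
  simp only [entropy, Fintype.sum_prod_type, sum_mul]

theorem MI_eq_entropy_add_sum_add_KL {q : α × β → ℝ} (hq : ∀ ab, 0 ≤ q ab) {r : β → α → ℝ}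
    (hqr : ∀ a b, 0 < q (a, b) → 0 < r b a) :
    MI q = entropy (fun a => ∑ b, q (a, b))
      + (∑ ab, if 0 < q ab then q ab * log (r ab.2 ab.1) else 0)
      + KL q (condJoint r fun b => ∑ a, q (a, b)) := by
  rw [MI, KL, KL, entropy_marginal_left, ← sum_neg_distrib, ← sum_add_distrib,
    ← sum_add_distrib]
  refine sum_congr rfl fun ⟨a, b⟩ _ => ?_
  split_ifs with h
  · have hqa : 0 < ∑ b', q (a, b') := sum_pos' (fun _ _ => hq _) ⟨b, mem_univ _, h⟩
    have hqb : 0 < ∑ a', q (a', b) := sum_pos' (fun _ _ => hq _) ⟨a, mem_univ _, h⟩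
    have hr := hqr a b h
    simp only [condJoint]
    rw [log_div h.ne' (by positivity), log_div h.ne' (by positivity),
      log_mul hqa.ne' hqb.ne', log_mul hr.ne' hqb.ne']
    ring
  · simp [le_antisymm (not_lt.mp h) (hq _)]

end Joint

theorem mi_ge_entropy_add_variational_general
    {X Z : Type*} [Fintype X] [Fintype Z]
    (q : X × Z → ℝ) (hq : IsPMF q)
    (r : Z → X → ℝ) (hr : ∀ z, IsPMF (r z))
    (hrpos : ∀ x z, 0 < q (x, z) → 0 < r z x) :
    MI q ≥ entropy (fun x => ∑ z, q (x, z)) +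
      ∑ p ∈ Finset.univ.filter (fun p : X × Z => 0 < q p), q p * Real.log (r p.2 p.1) := by
  have hac : ∀ xz, 0 < q xz → 0 < condJoint r (fun z => ∑ x, q (x, z)) xz := fun ⟨x, z⟩ h =>
    mul_pos (hrpos x z h) (sum_pos' (fun _ _ => hq.1 _) ⟨x, mem_univ _, h⟩)
  have gibbs := KL_nonneg hq (isPMF_condJoint hr (isPMF_marginal_right hq)) hac
  rw [ge_iff_le, sum_filter, MI_eq_entropy_add_sum_add_KL hq.1 hrpos]
  linarith

/-- Variational lower bound on mutual information.  For a joint PMF `q`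
on `X × Z` with marginal `q_X`, and any family `r(·|z)` of PMFs on `X` with
`r(x|z) > 0` whenever `q(x,z) > 0`,
`I(x;z) ≥ H(q_X) + Σ_{(x,z) : q(x,z)>0} q(x,z) · log r(x|z)`. -/
theorem mi_ge_entropy_add_variational
    {X Z : Type*} [Fintype X] [Fintype Z] [Nonempty X] [Nonempty Z]
    (q : X × Z → ℝ) (hq : IsPMF q)
    (r : Z → X → ℝ) (hr : ∀ z, IsPMF (r z))
    (hrpos : ∀ x z, 0 < q (x, z) → 0 < r z x) :
    MI q ≥ entropy (fun x => ∑ z, q (x, z)) +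
      ∑ p ∈ Finset.univ.filter (fun p : X × Z => 0 < q p), q p * Real.log (r p.2 p.1) :=
  mi_ge_entropy_add_variational_general q hq r hr hrpos
end
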